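/- arXiv:1605.02326 — 3 statements merged into one kernel-verified Lean document; each statement's English description precedes it below -/
import Mathlib

section
/- For γ < 0, λ > 0, θ > 0, the function t ↦ exp(-λ(θ^γ - (θ+t)^γ)) for t ≥ 0 equals ∑_{n=0}^∞ e^{-λθ^γ}(λθ^γ)^n/n! · (1+t/θ)^{γn}, i.e., the Tempered Positive Stable law with negative index γ is a compound Poisson of Gamma random variables: X =_d Gamma(scale 1/θ, shape -γN) where N is Poisson(λθ^γ). -/
/-! Writing `(θ + t) ^ γ = θ ^ γ * r` with `r = (1 + t / θ) ^ γ`, the Laplace transform becomes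
`exp (-c * (1 - r))` with `c = λ θ ^ γ`, which is the generating function `E[r ^ N]` of a Poisson
variable `N` of mean `c`; and `r ^ n = (1 + t / θ) ^ (γ n)` is the Laplace transform of
`Gamma(1/θ, -γ n)`. -/

open Real

theorem Real.hasSum_poisson_mul_pow (c r : ℝ) :
    HasSum (fun n : ℕ => exp (-c) * c ^ n / n.factorial * r ^ n) (exp (-(c * (1 - r)))) := by
  have h := (NormedSpace.expSeries_div_hasSum_exp (c * r)).mul_left (exp (-c))
  rw [← exp_eq_exp_ℝ, ← exp_add, show -c + c * r = -(c * (1 - r)) by ring] at h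
  convert! h using 2 with n
  rw [mul_pow]
  ring

theorem stmt_12_general (γ lam θ : ℝ) (hθ : 0 < θ) :
    ∀ t : ℝ, 0 ≤ t →
      HasSum
        (fun n : ℕ =>
          Real.exp (-(lam * θ ^ γ)) * (lam * θ ^ γ) ^ n / (Nat.factorial n) *
            (1 + t / θ) ^ (γ * n))
        (Real.exp (-(lam * (θ ^ γ - (θ + t) ^ γ)))) := by
  intro t ht
  have hbase : 0 ≤ 1 + t / θ := by positivity
  have hsplit : (θ + t) ^ γ = θ ^ γ * (1 + t / θ) ^ γ := by
    rw [← mul_rpow hθ.le hbase, mul_add, mul_one, mul_div_cancel₀ t hθ.ne']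
  simp_rw [rpow_mul_natCast hbase]
  convert hasSum_poisson_mul_pow (lam * θ ^ γ) ((1 + t / θ) ^ γ) using 3
  rw [hsplit]
  ring

theorem stmt_12 (γ lam θ : ℝ) (hγ : γ < 0) (hlam : 0 < lam) (hθ : 0 < θ) :
    ∀ t : ℝ, 0 ≤ t →
      HasSum
        (fun n : ℕ =>
          Real.exp (-(lam * θ ^ γ)) * (lam * θ ^ γ) ^ n / (Nat.factorial n) *
            (1 + t / θ) ^ (γ * n))
        (Real.exp (-(lam * (θ ^ γ - (θ + t) ^ γ)))) :=
  stmt_12_general γ lam θ hθ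
end

section
/- Let g be the Tempered Discrete Linnik p.g.f. with parameters a ≠ 0, a ≤ 1, b > 0, c ∈ (0,1), d > 0, and let μ = sgn(a)abc(1-c)^{a-1}. Then the variance, computed as g''(1) + g'(1) - g'(1)², equals dμ² + (1-ac)μ/(1-c). -/
/-!
Write `g = φ ^ p` with `p = -1/d` and `φ s = 1 + sgn(a) b d ((1 - c s)^a - (1 - c)^a)`.
Since `φ 1 = 1`, the chain rule gives `g'(1) = p φ'(1)` and
`g''(1) = p φ''(1) + p (p - 1) φ'(1)²`, and a direct computation gives `φ'(1) = -d μ` and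
`φ''(1) = d μ c (a - 1) / (1 - c)`; the variance formula is then an identity in `d`, `μ`, `a`, `c`.
-/

open Filter Topology

theorem hasDerivAt_one_sub_mul_rpow (c a s : ℝ) (hs : 0 < 1 - c * s) :
    HasDerivAt (fun s => (1 - c * s) ^ a) (-(c * a * (1 - c * s) ^ (a - 1))) s := by
  have hlin : HasDerivAt (fun s => 1 - c * s) (-c) s := by
    simpa using ((hasDerivAt_id s).const_mul c).const_sub 1
  convert hlin.rpow_const (p := a) (Or.inl hs.ne') using 1
  ring

theorem deriv_rpow_const_eventuallyEq {f f' : ℝ → ℝ} {x : ℝ} (p : ℝ)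
    (hf : ∀ᶠ y in 𝓝 x, HasDerivAt f (f' y) y) (hx : 0 < f x) :
    deriv (fun y => f y ^ p) =ᶠ[𝓝 x] fun y => f' y * p * f y ^ (p - 1) := by
  have hpos : ∀ᶠ y in 𝓝 x, 0 < f y :=
    hf.self_of_nhds.continuousAt.eventually_const_lt hx
  filter_upwards [hf, hpos] with y hy hy0
  exact (hy.rpow_const (Or.inl hy0.ne')).deriv

theorem deriv_rpow_const_of_eq_one {f f' : ℝ → ℝ} {x : ℝ} (p : ℝ)
    (hf : HasDerivAt f (f' x) x) (hx : f x = 1) :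
    deriv (fun y => f y ^ p) x = p * f' x := by
  rw [(hf.rpow_const (Or.inl (by simp [hx]))).deriv, hx, Real.one_rpow]
  ring

theorem deriv_deriv_rpow_const_of_eq_one {f f' : ℝ → ℝ} {f'' x : ℝ} (p : ℝ)
    (hf : ∀ᶠ y in 𝓝 x, HasDerivAt f (f' y) y) (hf' : HasDerivAt f' f'' x) (hx : f x = 1) :
    deriv (deriv fun y => f y ^ p) x = p * f'' + p * (p - 1) * f' x ^ 2 := by
  have hfx := hf.self_of_nhds
  have hrpow := hfx.rpow_const (p := p - 1) (Or.inl (by simp [hx]))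
  rw [(deriv_rpow_const_eventuallyEq p hf (by simp [hx])).deriv_eq]
  refine ((hf'.mul_const p).mul hrpow).deriv.trans ?_
  rw [hx, Real.one_rpow, Real.one_rpow]
  ring

theorem stmt_17_general (a b c d : ℝ) (hc : c ∈ Set.Ioo (0 : ℝ) 1) (hd : 0 < d)
    (g : ℝ → ℝ)
    (hg : ∀ s, g s = (1 + Real.sign a * b * d * ((1 - c * s) ^ a - (1 - c) ^ a)) ^ (-(1 / d)))
    (μ : ℝ) (hμ : μ = Real.sign a * a * b * c * (1 - c) ^ (a - 1)) :
    deriv (deriv g) 1 + deriv g 1 - (deriv g 1) ^ 2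
      = d * μ ^ 2 + (1 - a * c) * μ / (1 - c) := by
  have h1c : 0 < 1 - c := by linarith [hc.2]
  set K := Real.sign a * b * d
  set φ : ℝ → ℝ := fun s => 1 + K * ((1 - c * s) ^ a - (1 - c) ^ a)
  set φ' : ℝ → ℝ := fun s => K * -(c * a * (1 - c * s) ^ (a - 1))
  have hφ : ∀ᶠ s in 𝓝 1, HasDerivAt φ (φ' s) s := by
    have hpos : ∀ᶠ s in 𝓝 (1 : ℝ), 0 < 1 - c * s :=
      (continuous_const.sub (continuous_const.mul continuous_id)).continuousAt.eventually_const_lt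
        (by simpa using h1c)
    filter_upwards [hpos] with s hs
    exact (((hasDerivAt_one_sub_mul_rpow c a s hs).sub_const _).const_mul K).const_add 1
  have hφ' : HasDerivAt φ' (d * μ * c * (a - 1) / (1 - c)) 1 := by
    refine (((hasDerivAt_one_sub_mul_rpow c (a - 1) 1 (by simpa using h1c)).const_mul
      (c * a)).neg.const_mul K).congr_deriv ?_
    rw [mul_one, Real.rpow_sub_one h1c.ne', hμ]
    field_simp
    ring
  have hφ1 : φ 1 = 1 := by simp [φ]
  have hgφ : g = fun s => φ s ^ (-(1 / d)) := funext hg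
  have hφ'1 : φ' 1 = -(d * μ) := by simp only [φ', K, hμ, mul_one]; ring
  rw [hgφ, deriv_deriv_rpow_const_of_eq_one _ hφ hφ' hφ1,
    deriv_rpow_const_of_eq_one _ hφ.self_of_nhds hφ1, hφ'1]
  field_simp
  ring

theorem stmt_17 (a b c d : ℝ) (ha0 : a ≠ 0) (ha1 : a ≤ 1) (hb : 0 < b)
    (hc : c ∈ Set.Ioo (0 : ℝ) 1) (hd : 0 < d)
    (g : ℝ → ℝ)
    (hg : ∀ s, g s = (1 + Real.sign a * b * d * ((1 - c * s) ^ a - (1 - c) ^ a)) ^ (-(1 / d)))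
    (μ : ℝ) (hμ : μ = Real.sign a * a * b * c * (1 - c) ^ (a - 1)) :
    deriv (deriv g) 1 + deriv g 1 - (deriv g 1) ^ 2
      = d * μ ^ 2 + (1 - a * c) * μ / (1 - c) :=
  stmt_17_general a b c d hc hd g hg μ hμ
end

section
/- Let φ be analytic in a neighbourhood of α+β and let X be a nonnegative integer-valued random variable with p.g.f. g_X(s) = φ(α + β(1-φ₀s)^γ), with φ₀ ∈ [0,1] and γ, α, β real. Then for every k ∈ ℕ, P(X = k) = (-φ₀)^k ∑_{m=0}^{k} ((-β)^m/m!) φ^{(m)}(α+β) C_{γ,m}(k), where C_{γ,m}(k) = ∑_{j=0}^{m} (-1)^j binom(m,j) binom(γj,k). -/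
noncomputable def rchoose (x : ℝ) (k : ℕ) : ℝ :=
  (∏ i ∈ Finset.range k, (x - i)) / (Nat.factorial k)

noncomputable def C (γ : ℝ) (m k : ℕ) : ℝ :=
  ∑ j ∈ Finset.range (m + 1), (-1 : ℝ) ^ j * (m.choose j) * rchoose (γ * j) k

/-!
Write `g s = φ (c + w s)` with `c = α + β` and `w s = β * ((1 - φ₀ * s) ^ γ - 1)`, so `w 0 = 0`.
Replacing `φ` by its Taylor polynomial of degree `k` at `c` changes `g` only by `O(s ^ (k + 1))`,
and for analytic functions such a change does not affect the `k`-th derivative at `0`. It remains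
to differentiate `w ^ m = β ^ m * ∑ j, (-1) ^ (m - j) * (m.choose j) * (1 - φ₀ * s) ^ (γ * j)`
`k` times at `0`, which produces the falling factorials of `γ * j` in `rchoose`.
-/

open Filter Topology Asymptotics Finset

section

variable {𝕜 E F : Type*} [NontriviallyNormedField 𝕜] [NormedAddCommGroup E] [NormedSpace 𝕜 E]
  [NormedAddCommGroup F] [NormedSpace 𝕜 F]

theorem isBigO_norm_pow_of_le {m n : ℕ} (h : m ≤ n) :
    (fun y : E => ‖y‖ ^ n) =O[𝓝 0] fun y => ‖y‖ ^ m := by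
  have hball : ∀ᶠ y in 𝓝 (0 : E), ‖y‖ ≤ 1 :=
    eventually_of_mem (Metric.closedBall_mem_nhds 0 one_pos) fun y hy => by simpa using hy
  refine IsBigO.of_bound 1 (hball.mono fun y hy => ?_)
  simpa using pow_le_pow_of_le_one (norm_nonneg y) hy h

theorem HasFPowerSeriesAt.apply_eq_zero_of_isBigO {f : E → F}
    {p : FormalMultilinearSeries 𝕜 E F} {x : E} (hf : HasFPowerSeriesAt f p x) {n : ℕ}
    (h : (fun y => f (x + y)) =O[𝓝 0] fun y => ‖y‖ ^ (n + 1)) {m : ℕ} (hm : m ≤ n) (y : E) :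
    p m (fun _ => y) = 0 := by
  induction m using Nat.strong_induction_on generalizing y with
  | _ m ih =>
    have hsum : p.partialSum (m + 1) = fun y => p m fun _ => y := by
      funext z
      refine sum_eq_single_of_mem _ (self_mem_range_succ m) fun i hi hne => ?_
      have hlt : i < m := lt_of_le_of_ne (mem_range_succ_iff.mp hi) hne
      exact ih i hlt (by omega) z
    have hterm := (h.trans (isBigO_norm_pow_of_le (by omega))).sub
      (hsum ▸ hf.isBigO_sub_partialSum_pow (m + 1))
    simp only [sub_sub_cancel] at hterm
    exact hterm.continuousMultilinearMap_apply_eq_zero y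

theorem iteratedDeriv_comp_const_sub_mul (f : 𝕜 → F) (b a : 𝕜) (n : ℕ) :
    iteratedDeriv n (fun t => f (b - a * t)) =
      fun t => (-a) ^ n • iteratedDeriv n f (b - a * t) := by
  induction n generalizing f with
  | zero => simp
  | succ n ih =>
    have hderiv : deriv (fun t => f (b - a * t)) = fun t => -a • deriv f (b - a * t) := by
      funext t
      simpa [deriv_comp_const_sub] using deriv_comp_mul_left a (fun u => f (b - u)) t
    funext t
    rw [iteratedDeriv_succ', hderiv, iteratedDeriv_fun_const_smul_field, ih, iteratedDeriv_succ',
      smul_smul, pow_succ']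

variable [CompleteSpace 𝕜] [CharZero 𝕜]

theorem AnalyticAt.iteratedDeriv_eq_zero_of_isBigO {f : 𝕜 → 𝕜} {x : 𝕜}
    (hf : AnalyticAt 𝕜 f x) {n : ℕ} (h : f =O[𝓝 x] fun y => ‖y - x‖ ^ (n + 1)) {m : ℕ}
    (hm : m ≤ n) : iteratedDeriv m f x = 0 := by
  have hshift : (fun y => f (x + y)) =O[𝓝 0] fun y => ‖y‖ ^ (n + 1) := by
    simpa [Function.comp_def] using
      h.comp_tendsto ((continuous_const_add x).tendsto' 0 x (add_zero x))
  simpa [FormalMultilinearSeries.ofScalars_apply_eq, Nat.factorial_ne_zero] using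
    hf.hasFPowerSeriesAt.apply_eq_zero_of_isBigO hshift hm 1

theorem AnalyticAt.iteratedDeriv_eq_of_isBigO_sub {f g : 𝕜 → 𝕜} {x : 𝕜}
    (hf : AnalyticAt 𝕜 f x) (hg : AnalyticAt 𝕜 g x) {n : ℕ}
    (h : (fun y => f y - g y) =O[𝓝 x] fun y => ‖y - x‖ ^ (n + 1)) {m : ℕ} (hm : m ≤ n) :
    iteratedDeriv m f x = iteratedDeriv m g x := by
  rw [← sub_eq_zero, ← iteratedDeriv_fun_sub hf.contDiffAt hg.contDiffAt]
  exact (hf.sub hg).iteratedDeriv_eq_zero_of_isBigO h hm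

theorem AnalyticAt.isBigO_comp_add_sub_taylorSum {f w : 𝕜 → 𝕜} {c x : 𝕜}
    (hf : AnalyticAt 𝕜 f c) (hw : DifferentiableAt 𝕜 w x) (hwx : w x = 0) (n : ℕ) :
    (fun s => f (c + w s) - ∑ m ∈ range (n + 1), iteratedDeriv m f c / m.factorial * w s ^ m)
      =O[𝓝 x] fun s => ‖s - x‖ ^ (n + 1) := by
  have hw0 : Tendsto w (𝓝 x) (𝓝 0) := hwx ▸ hw.continuousAt.tendsto
  have hwO : (fun s => ‖w s‖ ^ (n + 1)) =O[𝓝 x] fun s => ‖s - x‖ ^ (n + 1) := by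
    simpa [hwx] using hw.isBigO_sub.norm_norm.pow (n + 1)
  refine ((hf.hasFPowerSeriesAt.isBigO_sub_partialSum_pow (n + 1)).comp_tendsto hw0).trans hwO
    |>.congr_left fun s => ?_
  simp [FormalMultilinearSeries.partialSum, mul_comm]

end

theorem analyticAt_one_sub_mul_rpow_zero (a p : ℝ) :
    AnalyticAt ℝ (fun t => (1 - a * t) ^ p) 0 := by
  have hbinom : AnalyticAt ℝ (fun x => (1 + x) ^ p) (-a * 0) := by
    simpa using Real.one_add_rpow_hasFPowerSeriesAt_zero.analyticAt
  simpa [Function.comp_def, ← sub_eq_add_neg] using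
    hbinom.comp (analyticAt_const.mul analyticAt_id : AnalyticAt ℝ (fun t => -a * t) 0)

theorem iteratedDeriv_one_sub_mul_rpow_zero (a p : ℝ) (n : ℕ) :
    iteratedDeriv n (fun t => (1 - a * t) ^ p) 0 = (-a) ^ n * n.factorial * rchoose p n := by
  simp only [iteratedDeriv_comp_const_sub_mul (· ^ p), iteratedDeriv_eq_iterate, smul_eq_mul,
    Real.iter_deriv_rpow_const, descPochhammer_eval_eq_prod_range, rchoose]
  field_simp
  simp

theorem iteratedDeriv_pow_one_sub_mul_rpow_sub_one_zero (a γ : ℝ) (m k : ℕ) :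
    iteratedDeriv k (fun s => ((1 - a * s) ^ γ - 1) ^ m) 0 =
      (-1) ^ m * (-a) ^ k * k.factorial * C γ m k := by
  have hpos : ∀ᶠ s in 𝓝 (0 : ℝ), 0 ≤ 1 - a * s :=
    ((by fun_prop : Continuous fun s : ℝ => 1 - a * s).tendsto' 0 1 (by simp)).eventually
      (eventually_ge_nhds one_pos)
  have hexpand : (fun s => ((1 - a * s) ^ γ - 1) ^ m) =ᶠ[𝓝 0]
      fun s => ∑ j ∈ range (m + 1), (-1) ^ (j + m) * (m.choose j : ℝ) * (1 - a * s) ^ (γ * j) := by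
    filter_upwards [hpos] with s hs
    rw [sub_pow]
    refine sum_congr rfl fun j _ => ?_
    rw [one_pow, mul_one, Real.rpow_mul hs, Real.rpow_natCast]
    ring
  rw [hexpand.iteratedDeriv_eq, iteratedDeriv_fun_sum
    (f := fun j s => (-1) ^ (j + m) * (m.choose j : ℝ) * (1 - a * s) ^ (γ * j)) fun j _ =>
    (analyticAt_const.mul (analyticAt_one_sub_mul_rpow_zero a _)).contDiffAt]
  simp only [iteratedDeriv_const_mul_field, iteratedDeriv_one_sub_mul_rpow_zero, C, mul_sum]
  refine sum_congr rfl fun j _ => ?_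
  ring

theorem iteratedDeriv_sum_mul_pow_rpow_zero (c : ℕ → ℝ) (a β γ : ℝ) (n k : ℕ) :
    iteratedDeriv k (fun s => ∑ m ∈ range (n + 1), c m * (β * ((1 - a * s) ^ γ - 1)) ^ m) 0 =
      (-a) ^ k * k.factorial * ∑ m ∈ range (n + 1), c m * (-β) ^ m * C γ m k := by
  have hw : AnalyticAt ℝ (fun s => β * ((1 - a * s) ^ γ - 1)) 0 :=
    analyticAt_const.mul ((analyticAt_one_sub_mul_rpow_zero a γ).sub analyticAt_const)
  rw [iteratedDeriv_fun_sum (f := fun m s => c m * (β * ((1 - a * s) ^ γ - 1)) ^ m)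
    fun m _ => (analyticAt_const.mul (hw.pow m)).contDiffAt, mul_sum]
  refine sum_congr rfl fun m _ => ?_
  simp only [mul_pow, ← mul_assoc]
  rw [iteratedDeriv_const_mul_field, iteratedDeriv_pow_one_sub_mul_rpow_sub_one_zero, neg_pow β]
  ring

theorem stmt_19_general (φ : ℝ → ℝ) (γ α β φ₀ : ℝ)
    (hφ : AnalyticAt ℝ φ (α + β))
    (g : ℝ → ℝ) (hg : ∀ s, g s = φ (α + β * (1 - φ₀ * s) ^ γ))
    (P : ℕ → ℝ) (hP : ∀ k, P k = iteratedDeriv k g 0 / (Nat.factorial k)) :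
    ∀ k : ℕ,
      P k = (-φ₀) ^ k *
        ∑ m ∈ Finset.range (k + 1),
          ((-β) ^ m / (Nat.factorial m)) * iteratedDeriv m φ (α + β) * C γ m k := by
  intro k
  set w : ℝ → ℝ := fun s => β * ((1 - φ₀ * s) ^ γ - 1) with hw_def
  have hw : AnalyticAt ℝ w 0 :=
    analyticAt_const.mul ((analyticAt_one_sub_mul_rpow_zero φ₀ γ).sub analyticAt_const)
  have hw0 : w 0 = 0 := by simp [w]
  have hgw : g = fun s => φ (α + β + w s) := funext fun s => by rw [hg, hw_def]; ring_nf
  have hg_an : AnalyticAt ℝ g 0 :=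
    hgw ▸ AnalyticAt.comp (g := φ) (by rwa [hw0, add_zero]) (analyticAt_const.add hw)
  have hjet := hg_an.iteratedDeriv_eq_of_isBigO_sub
    (g := fun s => ∑ m ∈ range (k + 1), iteratedDeriv m φ (α + β) / m.factorial * w s ^ m)
    (Finset.analyticAt_fun_sum _ fun m _ => analyticAt_const.mul (hw.pow m))
    (by simpa [hgw] using hφ.isBigO_comp_add_sub_taylorSum hw.differentiableAt hw0 k) le_rfl
  rw [hP, hjet]
  simp only [w]
  rw [iteratedDeriv_sum_mul_pow_rpow_zero, mul_div_right_comm, mul_div_cancel_right₀ _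
    (Nat.cast_ne_zero.mpr (Nat.factorial_ne_zero k))]
  exact congrArg _ (sum_congr rfl fun m _ => by ring)

theorem stmt_19 (φ : ℝ → ℝ) (γ α β φ₀ : ℝ) (hφ₀ : φ₀ ∈ Set.Icc (0 : ℝ) 1)
    (hφ : AnalyticAt ℝ φ (α + β))
    (g : ℝ → ℝ) (hg : ∀ s, g s = φ (α + β * (1 - φ₀ * s) ^ γ))
    (P : ℕ → ℝ) (hP : ∀ k, P k = iteratedDeriv k g 0 / (Nat.factorial k)) :
    ∀ k : ℕ,
      P k = (-φ₀) ^ k *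
        ∑ m ∈ Finset.range (k + 1),
          ((-β) ^ m / (Nat.factorial m)) * iteratedDeriv m φ (α + β) * C γ m k :=
  stmt_19_general φ γ α β φ₀ hφ g hg P hP
end
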